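/- arXiv:1901.11221 — 2 statements merged into one kernel-verified Lean document; each statement's English description precedes it below -/
import Mathlib

section
/- Let $x$ be a square integrable real random variable with mean $0$ and variance $\sigma^2 > 0$. Then $\mathbb{E}[\exp(x - \tfrac{1}{2}x^2 - \tfrac{1}{2}\sigma^2)] \le 1$. -/
/-!
Pointwise, `exp (t - t²/2) ≤ 1 + t + t²/2`. Taking expectations gives
`E[exp (x - x²/2)] ≤ 1 + σ²/2`, and `(1 + s) e^{-s} ≤ 1` with `s = σ²/2` absorbs the factor
`exp (-σ²/2)`.
-/

open MeasureTheory Real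

-- `1 - t + t²/2 ≤ exp (t²/2 - t)`, and `(1 - t + t²/2) (1 + t + t²/2) = 1 + t⁴/4 ≥ 1`.
lemma Real.exp_sub_half_sq_le (t : ℝ) : exp (t - t ^ 2 / 2) ≤ 1 + t + t ^ 2 / 2 := by
  have hneg : 1 - t + t ^ 2 / 2 ≤ exp (-(t - t ^ 2 / 2)) := by
    linarith [add_one_le_exp (-(t - t ^ 2 / 2))]
  have hprod : exp (t - t ^ 2 / 2) * exp (-(t - t ^ 2 / 2)) = 1 := by
    rw [← exp_add, add_neg_cancel, exp_zero]
  refine le_of_mul_le_mul_right ?_ (by nlinarith [sq_nonneg (t - 1)] : 0 < 1 - t + t ^ 2 / 2)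
  calc exp (t - t ^ 2 / 2) * (1 - t + t ^ 2 / 2)
      ≤ exp (t - t ^ 2 / 2) * exp (-(t - t ^ 2 / 2)) := by gcongr
    _ = 1 := hprod
    _ ≤ (1 + t + t ^ 2 / 2) * (1 - t + t ^ 2 / 2) := by nlinarith [sq_nonneg (t ^ 2)]

lemma Real.one_add_mul_exp_neg_le_one (s : ℝ) : (1 + s) * exp (-s) ≤ 1 := by
  have hprod : exp (-s) * exp s = 1 := by rw [← exp_add, neg_add_cancel, exp_zero]
  nlinarith [add_one_le_exp s, exp_pos (-s)]

namespace MeasureTheory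

variable {Ω : Type*} [MeasurableSpace Ω] {μ : Measure Ω} {x : Ω → ℝ}

lemma integrable_exp_sub_half_sq [IsFiniteMeasure μ] (hx : AEStronglyMeasurable x μ) :
    Integrable (fun ω => exp (x ω - x ω ^ 2 / 2)) μ := by
  refine .of_bound (by fun_prop) (exp (1 / 2)) (.of_forall fun ω => ?_)
  rw [norm_of_nonneg (exp_pos _).le, exp_le_exp]
  nlinarith [sq_nonneg (x ω - 1)]

lemma integral_exp_sub_half_sq_le [IsProbabilityMeasure μ] (hx : MemLp x 2 μ) :
    ∫ ω, exp (x ω - x ω ^ 2 / 2) ∂μ ≤ 1 + ∫ ω, x ω ∂μ + (∫ ω, x ω ^ 2 ∂μ) / 2 := by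
  have hx1 : Integrable x μ := hx.integrable one_le_two
  have hx2 : Integrable (fun ω => x ω ^ 2) μ := hx.integrable_sq
  have hx01 : Integrable (fun ω => 1 + x ω) μ := (integrable_const 1).add hx1
  calc ∫ ω, exp (x ω - x ω ^ 2 / 2) ∂μ
      ≤ ∫ ω, (1 + x ω + x ω ^ 2 / 2) ∂μ :=
        integral_mono (integrable_exp_sub_half_sq hx.aestronglyMeasurable)
          (hx01.add (hx2.div_const 2)) fun ω => exp_sub_half_sq_le (x ω)
    _ = 1 + ∫ ω, x ω ∂μ + (∫ ω, x ω ^ 2 ∂μ) / 2 := by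
        rw [integral_add hx01 (hx2.div_const 2),
          integral_add (integrable_const 1) hx1, integral_div, integral_const, probReal_univ,
          one_smul]

end MeasureTheory

theorem bercu_touati_general {Ω : Type*} [MeasureSpace Ω] (μ : Measure Ω) [IsProbabilityMeasure μ]
    (x : Ω → ℝ) (σ2 : ℝ) (hmem : MemLp x 2 μ)
    (hmean : ∫ ω, x ω ∂μ = 0) (hvar : ∫ ω, (x ω) ^ 2 ∂μ = σ2) :
    ∫ ω, Real.exp (x ω - (1 / 2) * (x ω) ^ 2 - (1 / 2) * σ2) ∂μ ≤ 1 := by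
  calc ∫ ω, Real.exp (x ω - (1 / 2) * (x ω) ^ 2 - (1 / 2) * σ2) ∂μ
      = (∫ ω, exp (x ω - x ω ^ 2 / 2) ∂μ) * exp (-(σ2 / 2)) := by
        rw [← integral_mul_const]
        congr 1 with ω
        rw [← exp_add]
        ring_nf
    _ ≤ (1 + σ2 / 2) * exp (-(σ2 / 2)) := by
        gcongr
        simpa [hmean, hvar] using integral_exp_sub_half_sq_le hmem
    _ ≤ 1 := one_add_mul_exp_neg_le_one _

/-- Lemma 2.1 of Bercu–Touati: for a square-integrable centered random variable `x`
with variance `σ² > 0`, `E[exp(x - x²/2 - σ²/2)] ≤ 1`. -/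
theorem bercu_touati {Ω : Type*} [MeasureSpace Ω] (μ : Measure Ω) [IsProbabilityMeasure μ]
    (x : Ω → ℝ) (σ2 : ℝ) (hmem : MemLp x 2 μ)
    (hmean : ∫ ω, x ω ∂μ = 0) (hvar : ∫ ω, (x ω) ^ 2 ∂μ = σ2) (hσ : 0 < σ2) :
    ∫ ω, Real.exp (x ω - (1 / 2) * (x ω) ^ 2 - (1 / 2) * σ2) ∂μ ≤ 1 :=
  bercu_touati_general μ x σ2 hmem hmean hvar
end

section
/- Let $\{\mathcal{F}_\tau\}_{\tau=0}^{t-1}$ be a filtration, and for $\tau = 1, \dots, t-1$ let $X_\tau \in \mathbb{R}^d$ be $\mathcal{F}_\tau$-measurable random vectors with $\|X_\tau\|_2 \le 1$ and $\mathbb{E}[X_\tau \mid \mathcal{F}_{\tau-1}] = 0$. Let $\mu \in \mathbb{R}^d$ with $\|\mu\|_2 \le 1$, define $D(\tau) = X_\tau X_\tau^T - \mathbb{E}[X_\tau X_\tau^T \mid \mathcal{F}_{\tau-1}]$ and $Y_\tau = D(\tau)\mu$, and set $\hat{\Sigma}_t = \sum_{\tau=1}^{t-1} X_\tau X_\tau^T$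 and $\Sigma_t = \sum_{\tau=1}^{t-1} \mathbb{E}[X_\tau X_\tau^T \mid \mathcal{F}_{\tau-1}]$. Then for every $\lambda \in \mathbb{R}^d$, $\mathbb{E}\left[\exp\left\{\lambda^T \sum_{\tau=1}^{t-1} \tfrac{1}{\sqrt{2}} Y_\tau - \tfrac{1}{2}\lambda^T(\hat{\Sigma}_t + \Sigma_t)\lambda\right\}\right] \le 1$. -/
open MeasureTheory Matrix Finset

attribute [local instance] Matrix.normedAddCommGroup Matrix.normedSpace

/-!
The exponent is a sum of increments `Z_τ = W_τ - V_τ`. With `A = (λᵀX_τ)(X_τᵀμ)` and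
`S = (λᵀX_τ)²`, one has `λᵀY_τ = A - E[A | ℱ_{τ-1}]`, so `W_τ = (A - E[A | ℱ_{τ-1}]) / √2`, and
`V_τ = (S + E[S | ℱ_{τ-1}]) / 2`. Since `|X_τᵀμ| ≤ 1` we have `A² ≤ S`, and the conditional
variance bound `E[(A - E[A])² | ℱ] ≤ E[A² | ℱ]` gives the paper's comparison
`W_τ² + E[W_τ² | ℱ_{τ-1}] ≤ 2 V_τ`. De la Peña's argument, based on
`exp (x - x² / 2) ≤ 1 + x + x² / 2`, then yields `E[exp Z_τ | ℱ_{τ-1}] ≤ 1`, so that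
`exp (∑ Z_τ)` is a supermartingale started at `1`.
-/

open Real ProbabilityTheory

theorem Real.exp_sub_sq_div_two_le (x : ℝ) : exp (x - x ^ 2 / 2) ≤ 1 + x + x ^ 2 / 2 := by
  set g : ℝ → ℝ := fun z => (1 + z + z ^ 2 / 2) * exp (z ^ 2 / 2 - z)
  set g' : ℝ → ℝ := fun z => z * (z ^ 2 + z + 2) / 2 * exp (z ^ 2 / 2 - z)
  have hg : ∀ z, HasDerivAt g (g' z) z := fun z => by
    have hp : HasDerivAt (fun z : ℝ => 1 + z + z ^ 2 / 2) (1 + z) z := by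
      simpa using ((hasDerivAt_id' z).const_add 1).fun_add ((hasDerivAt_pow 2 z).div_const 2)
    have hq : HasDerivAt (fun z : ℝ => z ^ 2 / 2 - z) (z - 1) z := by
      simpa using ((hasDerivAt_pow 2 z).div_const 2).fun_sub (hasDerivAt_id' z)
    exact (hp.fun_mul hq.exp).congr_deriv (by simp only [g']; ring)
  have hcont : ContinuousOn g Set.univ :=
    (continuous_iff_continuousAt.2 fun z => (hg z).continuousAt).continuousOn
  have hquad : ∀ z : ℝ, 0 < z ^ 2 + z + 2 := fun z => by nlinarith [sq_nonneg (z + 1 / 2)]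
  have hmin : g 0 ≤ g x := by
    rcases le_total 0 x with hx | hx
    · refine monotoneOn_of_hasDerivWithinAt_nonneg (convex_Ici 0) (hcont.mono (Set.subset_univ _))
        (fun z _ => (hg z).hasDerivWithinAt) (fun z hz => ?_) Set.self_mem_Ici hx hx
      rw [interior_Ici, Set.mem_Ioi] at hz
      have := hquad z
      positivity
    · refine antitoneOn_of_hasDerivWithinAt_nonpos (convex_Iic 0) (hcont.mono (Set.subset_univ _))
        (fun z _ => (hg z).hasDerivWithinAt) (fun z hz => ?_) hx Set.self_mem_Iic hx
      rw [interior_Iic, Set.mem_Iio] at hz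
      exact mul_nonpos_of_nonpos_of_nonneg
        (div_nonpos_of_nonpos_of_nonneg (mul_nonpos_of_nonpos_of_nonneg hz.le (hquad z).le)
          zero_le_two) (exp_pos _).le
  have hg0 : g 0 = 1 := by simp [g]
  calc exp (x - x ^ 2 / 2) ≤ exp (x - x ^ 2 / 2) * g x :=
        le_mul_of_one_le_right (exp_pos _).le (hg0 ▸ hmin)
    _ = 1 + x + x ^ 2 / 2 := by
        rw [mul_left_comm, ← exp_add, show x - x ^ 2 / 2 + (x ^ 2 / 2 - x) = 0 by ring, exp_zero,
          mul_one]

section ConditionalExpectation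

variable {Ω : Type*} {m m0 : MeasurableSpace Ω} {P : Measure Ω} {A S W V : Ω → ℝ}

lemma ae_sub_le_one_half_of_sq_add_condExp_sq_le
    (hWV : ∀ᵐ ω ∂P, W ω ^ 2 + P[W ^ 2|m] ω ≤ 2 * V ω) : ∀ᵐ ω ∂P, W ω - V ω ≤ 1 / 2 := by
  filter_upwards [hWV,
    condExp_nonneg (m := m) (f := W ^ 2) (ae_of_all P fun ω => sq_nonneg (W ω))]
    with ω hω (hq : 0 ≤ _)
  nlinarith [sq_nonneg (W ω - 1)]

lemma condExp_one_add_add_sq_div_two_ae_eq [IsFiniteMeasure P] (hm : m ≤ m0) (hW : MemLp W 2 P)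
    (hW0 : P[W|m] =ᵐ[P] 0) :
    P[fun ω => 1 + W ω + W ω ^ 2 / 2|m] =ᵐ[P] fun ω => 1 + P[W ^ 2|m] ω / 2 := by
  have hsplit : (fun ω => 1 + W ω + W ω ^ 2 / 2) =
      (fun _ => (1 : ℝ)) + W + (2 : ℝ)⁻¹ • W ^ 2 := by
    ext ω; simp only [Pi.add_apply, Pi.smul_apply, Pi.pow_apply, smul_eq_mul]; ring
  have h1 : Integrable (fun _ => (1 : ℝ)) P := integrable_const 1
  have h2 := hW.integrable one_le_two
  filter_upwards [condExp_add (g := (2 : ℝ)⁻¹ • W ^ 2) (h1.add h2) (hW.integrable_sq.smul _) m,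
    condExp_add h1 h2 m, condExp_smul (2 : ℝ)⁻¹ (W ^ 2) m, hW0] with ω e1 e2 e3 e4
  rw [hsplit, e1, Pi.add_apply, e2, Pi.add_apply, e3, e4, condExp_const hm]
  simp only [Pi.smul_apply, Pi.zero_apply, smul_eq_mul]
  ring

theorem condExp_exp_sub_le_one [IsFiniteMeasure P] (hm : m ≤ m0) (hW : MemLp W 2 P)
    (hW0 : P[W|m] =ᵐ[P] 0) (hV : AEStronglyMeasurable V P)
    (hWV : ∀ᵐ ω ∂P, W ω ^ 2 + P[W ^ 2|m] ω ≤ 2 * V ω) :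
    P[fun ω => exp (W ω - V ω)|m] ≤ᵐ[P] 1 := by
  set q := P[W ^ 2|m]
  set E : Ω → ℝ := fun ω => exp (-(q ω / 2))
  set G : Ω → ℝ := fun ω => exp (W ω - W ω ^ 2 / 2)
  have hWm := hW.aestronglyMeasurable
  have hq0 : 0 ≤ᵐ[P] q := condExp_nonneg (f := W ^ 2) (ae_of_all P fun ω => sq_nonneg (W ω))
  have hqm : StronglyMeasurable[m] q := stronglyMeasurable_condExp
  have hEm : StronglyMeasurable[m] E := by fun_prop
  -- `x - x ^ 2 / 2 ≤ 1 / 2` keeps every exponential below bounded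
  have hG : Integrable G P := by
    refine .of_bound (by fun_prop) (exp (1 / 2)) (ae_of_all P fun ω => ?_)
    rw [norm_of_nonneg (exp_pos _).le, exp_le_exp]
    nlinarith [sq_nonneg (W ω - 1)]
  have hEG : Integrable (E * G) P := by
    refine .of_bound ((hEm.mono hm).aestronglyMeasurable.mul hG.1) (exp (1 / 2)) ?_
    filter_upwards [hq0] with ω (hω : 0 ≤ q ω)
    rw [Pi.mul_apply, ← exp_add, norm_of_nonneg (exp_pos _).le, exp_le_exp]
    nlinarith [sq_nonneg (W ω - 1), hω]
  have hF : Integrable (fun ω => exp (W ω - V ω)) P := by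
    refine .of_bound (by fun_prop) (exp (1 / 2)) ?_
    filter_upwards [ae_sub_le_one_half_of_sq_add_condExp_sq_le hWV] with ω hω
    rwa [norm_of_nonneg (exp_pos _).le, exp_le_exp]
  have hT : Integrable (fun ω => 1 + W ω + W ω ^ 2 / 2) P :=
    ((integrable_const 1).add (hW.integrable one_le_two)).add (hW.integrable_sq.div_const 2)
  have hFEG : P[fun ω => exp (W ω - V ω)|m] ≤ᵐ[P] P[E * G|m] := by
    refine condExp_mono hF hEG ?_
    filter_upwards [hWV] with ω hω
    rw [Pi.mul_apply, ← exp_add, exp_le_exp]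
    linarith
  have hGT : P[G|m] ≤ᵐ[P] P[fun ω => 1 + W ω + W ω ^ 2 / 2|m] :=
    condExp_mono hG hT (ae_of_all P fun ω => exp_sub_sq_div_two_le (W ω))
  have hTq := condExp_one_add_add_sq_div_two_ae_eq hm hW hW0
  filter_upwards [hFEG, condExp_mul_of_stronglyMeasurable_left hEm hEG hG, hGT, hTq]
    with ω h1 h2 h3 h4
  calc P[fun ω => exp (W ω - V ω)|m] ω ≤ E ω * P[G|m] ω := h1.trans_eq h2
    _ ≤ E ω * (1 + q ω / 2) := by gcongr; exact h3.trans_eq h4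
    _ ≤ exp (-(q ω / 2)) * exp (q ω / 2) := by gcongr; linarith [add_one_le_exp (q ω / 2)]
    _ = 1 := by rw [← exp_add, neg_add_cancel, exp_zero]

lemma sq_sub_condExp_add_condVar_le [IsFiniteMeasure P] (hm : m ≤ m0) (hA : MemLp A 2 P) :
    ∀ᵐ ω ∂P, (A ω - P[A|m] ω) ^ 2 + Var[A; P | m] ω ≤ 2 * (A ω ^ 2 + P[A ^ 2|m] ω) := by
  filter_upwards [condVar_ae_eq_condExp_sq_sub_sq_condExp hm hA,
    condExp_nonneg (m := m) (f := (A - P[A|m]) ^ 2) (ae_of_all P fun ω => sq_nonneg _)]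
    with ω hvar (hvar0 : 0 ≤ Var[A; P | m] ω)
  simp only [Pi.sub_apply, Pi.pow_apply] at hvar
  nlinarith [sq_nonneg (A ω + P[A|m] ω)]

lemma memLp_two_of_sq_le [IsFiniteMeasure P] (hA : AEStronglyMeasurable A P) (hS : Integrable S P)
    (hAS : ∀ᵐ ω ∂P, A ω ^ 2 ≤ S ω) : MemLp A 2 P :=
  (memLp_two_iff_integrable_sq hA).2 <| hS.mono' (hA.pow 2) <| by
    filter_upwards [hAS] with ω hω
    rwa [Real.norm_of_nonneg (sq_nonneg _)]

lemma centered_sq_add_condExp_sq_le [IsFiniteMeasure P] (hm : m ≤ m0)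
    (hA : AEStronglyMeasurable A P) (hS : Integrable S P) (hAS : ∀ᵐ ω ∂P, A ω ^ 2 ≤ S ω) :
    ∀ᵐ ω ∂P, (A ω - P[A|m] ω) ^ 2 + P[(A - P[A|m]) ^ 2|m] ω ≤ 2 * (S ω + P[S|m] ω) := by
  have hA2 := memLp_two_of_sq_le hA hS hAS
  filter_upwards [sq_sub_condExp_add_condVar_le hm hA2, hAS,
    condExp_mono (m := m) (f := A ^ 2) hA2.integrable_sq hS (by exact hAS)] with ω h hω hcond
  exact h.trans (by linarith)

lemma condExp_centered_ae_eq_zero (hm : m ≤ m0) [SigmaFinite (P.trim hm)] (hA : Integrable A P) :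
    P[A - P[A|m]|m] =ᵐ[P] 0 := by
  filter_upwards [condExp_sub hA integrable_condExp m] with ω hω
  rw [hω, condExp_of_stronglyMeasurable hm stronglyMeasurable_condExp integrable_condExp,
    Pi.sub_apply, sub_self, Pi.zero_apply]

lemma centered_div_sqrt_two_sq_add_condExp_sq_le [IsFiniteMeasure P] (hm : m ≤ m0)
    (hA : AEStronglyMeasurable A P) (hS : Integrable S P) (hAS : ∀ᵐ ω ∂P, A ω ^ 2 ≤ S ω) :
    ∀ᵐ ω ∂P, ((√2)⁻¹ • (A - P[A|m])) ω ^ 2 + P[((√2)⁻¹ • (A - P[A|m])) ^ 2|m] ω ≤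
      2 * ((S ω + P[S|m] ω) / 2) := by
  have hsq : ((√2)⁻¹ • (A - P[A|m])) ^ 2 = (2 : ℝ)⁻¹ • (A - P[A|m]) ^ 2 := by
    ext ω
    simp only [Pi.pow_apply, Pi.smul_apply, smul_eq_mul, mul_pow, inv_pow,
      Real.sq_sqrt zero_le_two]
  filter_upwards [centered_sq_add_condExp_sq_le hm hA hS hAS,
    condExp_smul (m := m) (μ := P) (2 : ℝ)⁻¹ ((A - P[A|m]) ^ 2)] with ω h hω
  rw [hsq, hω, ← Pi.pow_apply, hsq]
  simp only [Pi.smul_apply, Pi.pow_apply, Pi.sub_apply, smul_eq_mul] at h ⊢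
  linarith

lemma ae_centered_div_sqrt_two_sub_le_one_half [IsFiniteMeasure P] (hm : m ≤ m0)
    (hA : AEStronglyMeasurable A P) (hS : Integrable S P) (hAS : ∀ᵐ ω ∂P, A ω ^ 2 ≤ S ω) :
    ∀ᵐ ω ∂P, (√2)⁻¹ * (A ω - P[A|m] ω) - (S ω + P[S|m] ω) / 2 ≤ 1 / 2 :=
  ae_sub_le_one_half_of_sq_add_condExp_sq_le <|
    centered_div_sqrt_two_sq_add_condExp_sq_le hm hA hS hAS

theorem condExp_exp_centered_div_sqrt_two_sub_le_one [IsFiniteMeasure P] (hm : m ≤ m0)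
    (hA : AEStronglyMeasurable A P) (hS : Integrable S P) (hAS : ∀ᵐ ω ∂P, A ω ^ 2 ≤ S ω) :
    P[fun ω => exp ((√2)⁻¹ * (A ω - P[A|m] ω) - (S ω + P[S|m] ω) / 2)|m] ≤ᵐ[P] 1 := by
  have hA2 := memLp_two_of_sq_le hA hS hAS
  refine condExp_exp_sub_le_one (W := (√2)⁻¹ • (A - P[A|m])) hm
    ((hA2.sub (hA2.condExp one_le_two)).const_smul _) ?_
    ((hS.add integrable_condExp).div_const 2).aestronglyMeasurable
    (centered_div_sqrt_two_sq_add_condExp_sq_le hm hA hS hAS)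
  filter_upwards [condExp_smul (m := m) (μ := P) (√2)⁻¹ (A - P[A|m]),
    condExp_centered_ae_eq_zero hm (hA2.integrable one_le_two)] with ω h h0
  rw [h, Pi.smul_apply, h0, Pi.zero_apply, smul_zero]

end ConditionalExpectation

section DotProduct

variable {n : Type*} [Fintype n]

noncomputable def dotProductMulVecCLM (u v : n → ℝ) : Matrix n n ℝ →L[ℝ] ℝ :=
  LinearMap.toContinuousLinearMap
    { toFun := fun M => u ⬝ᵥ M *ᵥ v
      map_add' := fun M N => by rw [add_mulVec, dotProduct_add]
      map_smul' := fun c M => by rw [smul_mulVec, dotProduct_smul]; rfl }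

lemma dotProduct_vecMulVec_mulVec (u x y v : n → ℝ) :
    u ⬝ᵥ vecMulVec x y *ᵥ v = (u ⬝ᵥ x) * (y ⬝ᵥ v) := by
  rw [vecMulVec_mulVec, op_smul_eq_smul, dotProduct_smul, smul_eq_mul, mul_comm]

lemma dotProduct_sq_le (u v : n → ℝ) : (u ⬝ᵥ v) ^ 2 ≤ (u ⬝ᵥ u) * (v ⬝ᵥ v) := by
  simpa only [dotProduct, sq] using Finset.sum_mul_sq_le_sq_mul_sq univ u v

lemma abs_mul_le_dotProduct_self (x : n → ℝ) (i j : n) : |x i * x j| ≤ x ⬝ᵥ x := by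
  have hx : ∀ k, x k ^ 2 ≤ x ⬝ᵥ x := fun k => by
    simpa only [sq, dotProduct] using
      single_le_sum (f := fun k => x k * x k) (fun k _ => mul_self_nonneg _) (mem_univ k)
  rw [abs_mul]
  nlinarith [sq_nonneg (|x i| - |x j|), sq_abs (x i), sq_abs (x j), hx i, hx j]

lemma norm_vecMulVec_self_le (x : n → ℝ) : ‖vecMulVec x x‖ ≤ x ⬝ᵥ x :=
  (norm_le_iff (sum_nonneg fun i _ => mul_self_nonneg (x i))).2 fun i j =>
    abs_mul_le_dotProduct_self x i j

end DotProduct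

/-- The topology of `Matrix.normedAddCommGroup` agrees with the product topology only up to
unfolding, so instance search does not find this instance on its own. -/
noncomputable abbrev Matrix.continuousENorm {n : Type*} [Fintype n] :
    ContinuousENorm (Matrix n n ℝ) :=
  SeminormedAddGroup.toContinuousENorm

attribute [local instance] Matrix.continuousENorm

section MatrixStep

variable {Ω n : Type*} [Fintype n] {m m' m0 : MeasurableSpace Ω} {P : Measure Ω}
  {X : Ω → n → ℝ} {μ lam : n → ℝ}

noncomputable def deviationIncrement (P : Measure Ω) (m : MeasurableSpace Ω) (X : Ω → n → ℝ)
    (μ lam : n → ℝ) (ω : Ω) : ℝ :=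
  (1 / √2) * (lam ⬝ᵥ (vecMulVec (X ω) (X ω) - P[fun ω' => vecMulVec (X ω') (X ω')|m] ω) *ᵥ μ) -
    1 / 2 * (lam ⬝ᵥ (vecMulVec (X ω) (X ω) + P[fun ω' => vecMulVec (X ω') (X ω')|m] ω) *ᵥ lam)

lemma stronglyMeasurable_deviationIncrement (hm : m ≤ m') (hX : StronglyMeasurable[m'] X) :
    StronglyMeasurable[m'] (deviationIncrement P m X μ lam) := by
  have hXX : StronglyMeasurable[m'] fun ω => vecMulVec (X ω) (X ω) :=
    (continuous_id.matrix_vecMulVec continuous_id).comp_stronglyMeasurable hX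
  have hQ : StronglyMeasurable[m'] P[fun ω => vecMulVec (X ω) (X ω)|m] :=
    stronglyMeasurable_condExp.mono hm
  have hT (u v : n → ℝ) := (dotProductMulVecCLM u v).continuous
  exact ((hT lam μ |>.comp_stronglyMeasurable (hXX.sub hQ)).const_mul _).sub
    ((hT lam lam |>.comp_stronglyMeasurable (hXX.add hQ)).const_mul _)

lemma deviationIncrement_ae_eq (hXX : Integrable (fun ω => vecMulVec (X ω) (X ω)) P) :
    deviationIncrement P m X μ lam =ᵐ[P] fun ω =>
      (√2)⁻¹ * (lam ⬝ᵥ vecMulVec (X ω) (X ω) *ᵥ μ -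
        P[fun ω => lam ⬝ᵥ vecMulVec (X ω) (X ω) *ᵥ μ|m] ω) -
      (lam ⬝ᵥ vecMulVec (X ω) (X ω) *ᵥ lam +
        P[fun ω => lam ⬝ᵥ vecMulVec (X ω) (X ω) *ᵥ lam|m] ω) / 2 := by
  filter_upwards [(dotProductMulVecCLM lam μ).comp_condExp_comm (m := m) hXX,
    (dotProductMulVecCLM lam lam).comp_condExp_comm (m := m) hXX] with ω
    (hμ : lam ⬝ᵥ P[fun ω => vecMulVec (X ω) (X ω)|m] ω *ᵥ μ =
      P[fun ω => lam ⬝ᵥ vecMulVec (X ω) (X ω) *ᵥ μ|m] ω)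
    (hlam : lam ⬝ᵥ P[fun ω => vecMulVec (X ω) (X ω)|m] ω *ᵥ lam =
      P[fun ω => lam ⬝ᵥ vecMulVec (X ω) (X ω) *ᵥ lam|m] ω)
  rw [deviationIncrement, sub_mulVec, add_mulVec, dotProduct_sub, dotProduct_add, ← hμ, ← hlam]
  ring

lemma sq_dotProduct_vecMulVec_mulVec_le {x : n → ℝ} (hx : (x ⬝ᵥ μ) ^ 2 ≤ 1) :
    (lam ⬝ᵥ vecMulVec x x *ᵥ μ) ^ 2 ≤ lam ⬝ᵥ vecMulVec x x *ᵥ lam := by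
  rw [dotProduct_vecMulVec_mulVec, dotProduct_vecMulVec_mulVec, dotProduct_comm x lam, mul_pow,
    ← sq]
  exact mul_le_of_le_one_right (sq_nonneg _) hx

lemma integrable_vecMulVec_self [IsFiniteMeasure P] (hX : AEStronglyMeasurable X P) {C : ℝ}
    (hXC : ∀ᵐ ω ∂P, X ω ⬝ᵥ X ω ≤ C) : Integrable (fun ω => vecMulVec (X ω) (X ω)) P :=
  .of_bound ((continuous_id.matrix_vecMulVec continuous_id).comp_aestronglyMeasurable hX) C <|
    hXC.mono fun ω hω => (norm_vecMulVec_self_le (X ω)).trans hω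

theorem ae_deviationIncrement_le_one_half [IsFiniteMeasure P] (hm : m ≤ m0)
    (hXX : Integrable (fun ω => vecMulVec (X ω) (X ω)) P) (hXμ : ∀ᵐ ω ∂P, (X ω ⬝ᵥ μ) ^ 2 ≤ 1) :
    ∀ᵐ ω ∂P, deviationIncrement P m X μ lam ω ≤ 1 / 2 := by
  filter_upwards [deviationIncrement_ae_eq hXX, ae_centered_div_sqrt_two_sub_le_one_half hm
    ((dotProductMulVecCLM lam μ).continuous.comp_aestronglyMeasurable hXX.1)
    ((dotProductMulVecCLM lam lam).integrable_comp hXX)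
    (hXμ.mono fun _ => sq_dotProduct_vecMulVec_mulVec_le)] with ω h hle
  exact h.trans_le hle

theorem condExp_exp_deviationIncrement_le_one [IsFiniteMeasure P] (hm : m ≤ m0)
    (hXX : Integrable (fun ω => vecMulVec (X ω) (X ω)) P) (hXμ : ∀ᵐ ω ∂P, (X ω ⬝ᵥ μ) ^ 2 ≤ 1) :
    P[fun ω => exp (deviationIncrement P m X μ lam ω)|m] ≤ᵐ[P] 1 :=
  (condExp_congr_ae ((deviationIncrement_ae_eq hXX).fun_comp exp)).trans_le <|
    condExp_exp_centered_div_sqrt_two_sub_le_one hm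
      ((dotProductMulVecCLM lam μ).continuous.comp_aestronglyMeasurable hXX.1)
      ((dotProductMulVecCLM lam lam).integrable_comp hXX)
      (hXμ.mono fun _ => sq_dotProduct_vecMulVec_mulVec_le)

end MatrixStep

section ExponentialSupermartingale

variable {Ω : Type*} {m0 : MeasurableSpace Ω} {P : Measure Ω} {ℱ : Filtration ℕ m0}
  {Z : ℕ → Ω → ℝ} {C : ℝ}

lemma stronglyMeasurable_sum_Icc (hZm : ∀ k, StronglyMeasurable[ℱ (k + 1)] (Z (k + 1))) (n : ℕ) :
    StronglyMeasurable[ℱ n] fun ω => ∑ τ ∈ Icc 1 n, Z τ ω := by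
  induction n with
  | zero => simpa using stronglyMeasurable_const
  | succ n ih =>
    simp_rw [sum_Icc_succ_top (Nat.le_add_left 1 n)]
    exact (ih.mono (ℱ.mono n.le_succ)).add (hZm n)

lemma ae_sum_Icc_le (hZC : ∀ k, ∀ᵐ ω ∂P, Z (k + 1) ω ≤ C) (n : ℕ) :
    ∀ᵐ ω ∂P, ∑ τ ∈ Icc 1 n, Z τ ω ≤ n * C := by
  induction n with
  | zero => simp
  | succ n ih =>
    filter_upwards [ih, hZC n] with ω hn hZ
    rw [sum_Icc_succ_top (Nat.le_add_left 1 n), Nat.cast_succ]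
    linarith

theorem supermartingale_exp_sum_Icc [IsFiniteMeasure P]
    (hZm : ∀ k, StronglyMeasurable[ℱ (k + 1)] (Z (k + 1))) (hZC : ∀ k, ∀ᵐ ω ∂P, Z (k + 1) ω ≤ C)
    (hZ : ∀ k, P[fun ω => exp (Z (k + 1) ω)|ℱ k] ≤ᵐ[P] 1) :
    Supermartingale (fun n ω => exp (∑ τ ∈ Icc 1 n, Z τ ω)) ℱ P := by
  have hM : ∀ n, StronglyMeasurable[ℱ n] fun ω => exp (∑ τ ∈ Icc 1 n, Z τ ω) := fun n =>
    continuous_exp.comp_stronglyMeasurable (stronglyMeasurable_sum_Icc hZm n)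
  have hMint : ∀ n, Integrable (fun ω => exp (∑ τ ∈ Icc 1 n, Z τ ω)) P := fun n => by
    refine .of_bound ((hM n).mono (ℱ.le n)).aestronglyMeasurable (exp (n * C)) ?_
    filter_upwards [ae_sum_Icc_le hZC n] with ω hω
    rwa [norm_of_nonneg (exp_pos _).le, exp_le_exp]
  have hexp : ∀ k, Integrable (fun ω => exp (Z (k + 1) ω)) P := fun k => by
    have hZm' := (hZm k).mono (ℱ.le _)
    refine .of_bound (continuous_exp.comp_stronglyMeasurable hZm').aestronglyMeasurable (exp C) ?_
    filter_upwards [hZC k] with ω hω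
    rwa [norm_of_nonneg (exp_pos _).le, exp_le_exp]
  refine supermartingale_nat hM hMint fun k => ?_
  have hsplit : (fun ω => exp (∑ τ ∈ Icc 1 (k + 1), Z τ ω)) =
      (fun ω => exp (∑ τ ∈ Icc 1 k, Z τ ω)) * fun ω => exp (Z (k + 1) ω) := by
    ext ω
    rw [Pi.mul_apply, sum_Icc_succ_top (Nat.le_add_left 1 k), exp_add]
  rw [hsplit]
  filter_upwards [condExp_mul_of_stronglyMeasurable_left (hM k) (hsplit ▸ hMint (k + 1)) (hexp k),
    hZ k] with ω h h1
  rw [h, Pi.mul_apply]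
  exact mul_le_of_le_one_right (exp_pos _).le h1

theorem integral_exp_sum_Icc_le_one [IsProbabilityMeasure P]
    (hZm : ∀ k, StronglyMeasurable[ℱ (k + 1)] (Z (k + 1))) (hZC : ∀ k, ∀ᵐ ω ∂P, Z (k + 1) ω ≤ C)
    (hZ : ∀ k, P[fun ω => exp (Z (k + 1) ω)|ℱ k] ≤ᵐ[P] 1) (n : ℕ) :
    ∫ ω, exp (∑ τ ∈ Icc 1 n, Z τ ω) ∂P ≤ 1 := by
  simpa using (supermartingale_exp_sum_Icc hZm hZC hZ).setIntegral_le n.zero_le MeasurableSet.univ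

end ExponentialSupermartingale

theorem matrix_deviation_exponential_general {Ω : Type*} {m0 : MeasurableSpace Ω}
    (P : Measure Ω) [IsProbabilityMeasure P] {d t : ℕ}
    (ℱ : Filtration ℕ m0) (X : ℕ → Ω → Fin d → ℝ)
    (hXmeas : ∀ τ, 1 ≤ τ → StronglyMeasurable[ℱ τ] (X τ))
    (hXbdd : ∀ τ, 1 ≤ τ → ∀ ω, Real.sqrt (X τ ω ⬝ᵥ X τ ω) ≤ 1)
    (μ : Fin d → ℝ) (hμ : Real.sqrt (μ ⬝ᵥ μ) ≤ 1)
    (D : ℕ → Ω → Matrix (Fin d) (Fin d) ℝ)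
    (hD : ∀ τ ω, D τ ω = vecMulVec (X τ ω) (X τ ω) -
      (P[fun ω' => vecMulVec (X τ ω') (X τ ω') | ℱ (τ - 1)]) ω)
    (Y : ℕ → Ω → Fin d → ℝ) (hY : ∀ τ ω, Y τ ω = (D τ ω).mulVec μ)
    (Shat Sbar : Ω → Matrix (Fin d) (Fin d) ℝ)
    (hShat : ∀ ω, Shat ω = ∑ τ ∈ Icc 1 (t - 1), vecMulVec (X τ ω) (X τ ω))
    (hSbar : ∀ ω, Sbar ω = ∑ τ ∈ Icc 1 (t - 1),
      (P[fun ω' => vecMulVec (X τ ω') (X τ ω') | ℱ (τ - 1)]) ω)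
    (lam : Fin d → ℝ) :
    ∫ ω, Real.exp (lam ⬝ᵥ (∑ τ ∈ Icc 1 (t - 1), (1 / Real.sqrt 2) • Y τ ω) -
      (1 / 2) * (lam ⬝ᵥ (Shat ω + Sbar ω).mulVec lam)) ∂P ≤ 1 := by
  have hexponent : ∀ ω, lam ⬝ᵥ (∑ τ ∈ Icc 1 (t - 1), (1 / √2) • Y τ ω) -
      1 / 2 * (lam ⬝ᵥ (Shat ω + Sbar ω) *ᵥ lam) =
      ∑ τ ∈ Icc 1 (t - 1), deviationIncrement P (ℱ (τ - 1)) (X τ) μ lam ω := fun ω => by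
    rw [hShat, hSbar, ← sum_add_distrib, sum_mulVec, dotProduct_sum, dotProduct_sum, mul_sum,
      ← sum_sub_distrib]
    refine sum_congr rfl fun τ _ => ?_
    rw [dotProduct_smul, smul_eq_mul, hY, hD, deviationIncrement]
  simp_rw [hexponent]
  have hX1 (k : ℕ) (ω : Ω) : X (k + 1) ω ⬝ᵥ X (k + 1) ω ≤ 1 :=
    Real.sqrt_le_one.1 (hXbdd (k + 1) k.succ_pos ω)
  have hXX (k : ℕ) : Integrable (fun ω => vecMulVec (X (k + 1) ω) (X (k + 1) ω)) P :=
    integrable_vecMulVec_self (((hXmeas (k + 1) k.succ_pos).mono (ℱ.le _)).aestronglyMeasurable)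
      (ae_of_all P (hX1 k))
  have hXμ (k : ℕ) : ∀ᵐ ω ∂P, (X (k + 1) ω ⬝ᵥ μ) ^ 2 ≤ 1 := ae_of_all P fun ω =>
    (dotProduct_sq_le _ _).trans
      (mul_le_one₀ (hX1 k ω) (sum_nonneg fun i _ => mul_self_nonneg (μ i)) (Real.sqrt_le_one.1 hμ))
  exact integral_exp_sum_Icc_le_one (C := 1 / 2)
    (fun k => stronglyMeasurable_deviationIncrement (ℱ.mono (Nat.sub_le _ _))
      (hXmeas (k + 1) k.succ_pos))
    (fun k => ae_deviationIncrement_le_one_half (ℱ.le _) (hXX k) (hXμ k))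
    (fun k => condExp_exp_deviationIncrement_le_one (ℱ.le _) (hXX k) (hXμ k)) (t - 1)

/-- Lemma 4.4 of the paper: exponential supermartingale bound for the matrix-deviation
process `Y_τ = D(τ)μ` where `D(τ) = X_τX_τᵀ - E[X_τX_τᵀ | ℱ_{τ-1}]`. -/
theorem matrix_deviation_exponential {Ω : Type*} {m0 : MeasurableSpace Ω}
    (P : Measure Ω) [IsProbabilityMeasure P] {d t : ℕ}
    (ℱ : Filtration ℕ m0) (X : ℕ → Ω → Fin d → ℝ)
    (hXmeas : ∀ τ, 1 ≤ τ → StronglyMeasurable[ℱ τ] (X τ))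
    (hXbdd : ∀ τ, 1 ≤ τ → ∀ ω, Real.sqrt (X τ ω ⬝ᵥ X τ ω) ≤ 1)
    (hXmean : ∀ τ, 1 ≤ τ → P[X τ | ℱ (τ - 1)] =ᵐ[P] 0)
    (μ : Fin d → ℝ) (hμ : Real.sqrt (μ ⬝ᵥ μ) ≤ 1)
    (D : ℕ → Ω → Matrix (Fin d) (Fin d) ℝ)
    (hD : ∀ τ ω, D τ ω = vecMulVec (X τ ω) (X τ ω) -
      (P[fun ω' => vecMulVec (X τ ω') (X τ ω') | ℱ (τ - 1)]) ω)
    (Y : ℕ → Ω → Fin d → ℝ) (hY : ∀ τ ω, Y τ ω = (D τ ω).mulVec μ)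
    (Shat Sbar : Ω → Matrix (Fin d) (Fin d) ℝ)
    (hShat : ∀ ω, Shat ω = ∑ τ ∈ Icc 1 (t - 1), vecMulVec (X τ ω) (X τ ω))
    (hSbar : ∀ ω, Sbar ω = ∑ τ ∈ Icc 1 (t - 1),
      (P[fun ω' => vecMulVec (X τ ω') (X τ ω') | ℱ (τ - 1)]) ω)
    (lam : Fin d → ℝ) :
    ∫ ω, Real.exp (lam ⬝ᵥ (∑ τ ∈ Icc 1 (t - 1), (1 / Real.sqrt 2) • Y τ ω) -
      (1 / 2) * (lam ⬝ᵥ (Shat ω + Sbar ω).mulVec lam)) ∂P ≤ 1 :=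
  matrix_deviation_exponential_general P ℱ X hXmeas hXbdd μ hμ D hD Y hY Shat Sbar hShat hSbar lam
end
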